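/- arXiv:1801.05483 — 3 statements merged into one kernel-verified Lean document; each statement's English description precedes it below -/
import Mathlib

section
/- Let P̄ be Hermitian positive definite, W̄ diagonal nonnegative and commuting with P̄ so that W̄P̄ is Hermitian PSD. Then S_opt = √𝒫 · U₁*, where U₁'s columns are orthonormal eigenvectors of W̄P̄ for its τ largest eigenvalues, maximizes tr((S P̄ S*)^{-1} S P̄ W̄ P̄ S*) over all τ×n matrices S of full row rank whose columns s_k satisfy s_k* s_k ≤ 𝒫, achieving value equal to the sum of the τ largest eigenvalues of W̄P̄. -/
/-! With `R = P^{1/2}`, which commutes with `W`, and `M = R Sᴴ`, the objective equals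
`tr (Π W P)` for the orthogonal projection `Π = M (Mᴴ M)⁻¹ Mᴴ` of rank `τ`. In an eigenbasis of
`W P` this trace is `∑ⱼ Πⱼⱼ λⱼ` with weights `Πⱼⱼ ∈ [0, 1]` summing to `τ`, hence at most the sum
of the `τ` largest eigenvalues. For `S = √Pow U₁ᴴ` one has `W P Sᴴ = Sᴴ D`, and the objective
collapses to `tr D`. -/

open Matrix ComplexOrder
open scoped MatrixOrder Finset

theorem Finset.sum_mul_le_sum_of_mem_Icc_of_sum_eq_card {ι : Type*} [Fintype ι]
    (s : Finset ι) (c lam : ι → ℝ) (hc : ∀ j, c j ∈ Set.Icc 0 1) (hsum : ∑ j, c j = #s)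
    (htop : ∀ i ∈ s, ∀ j ∉ s, lam j ≤ lam i) :
    ∑ j, c j * lam j ≤ ∑ i ∈ s, lam i := by
  classical
  obtain ⟨μ, hμs, hμsc⟩ : ∃ μ, (∀ i ∈ s, μ ≤ lam i) ∧ ∀ j ∉ s, c j * lam j ≤ c j * μ := by
    rcases s.eq_empty_or_nonempty with rfl | hs
    · have hc0 : ∀ j, c j = 0 := fun j =>
        (Finset.sum_eq_zero_iff_of_nonneg fun j _ => (hc j).1).mp (by simpa using hsum) j
          (mem_univ j)
      exact ⟨0, by simp, fun j _ => by simp [hc0 j]⟩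
    · obtain ⟨i₀, hi₀, hmin⟩ := s.exists_min_image lam hs
      exact ⟨lam i₀, hmin, fun j hj => mul_le_mul_of_nonneg_left (htop i₀ hi₀ j hj) (hc j).1⟩
  have hterm : ∀ j, c j * lam j - (if j ∈ s then lam j else 0)
      ≤ μ * (c j - if j ∈ s then 1 else 0) := by
    intro j
    by_cases hj : j ∈ s
    · simp only [hj, if_true]
      nlinarith [hμs j hj, (hc j).2]
    · simp only [hj, if_false]
      linarith [hμsc j hj]
  have := Finset.sum_le_sum fun j (_ : j ∈ univ) => hterm j
  simp only [Finset.sum_sub_distrib, ← Finset.mul_sum, Finset.sum_ite_mem, univ_inter,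
    hsum] at this
  simpa using this

namespace Matrix

variable {𝕜 m n : Type*} [RCLike 𝕜] [Fintype m] [Fintype n] [DecidableEq m] [DecidableEq n]

omit [DecidableEq m] [DecidableEq n] in
theorem vecMul_injective_of_rank_eq_card {S : Matrix m n 𝕜} (hS : S.rank = Fintype.card m) :
    Function.Injective fun v => v ᵥ* S :=
  vecMul_injective_iff.mpr <| linearIndependent_iff_card_eq_finrank_span.mpr <|
    hS ▸ S.rank_eq_finrank_span_row

omit [DecidableEq n] in
theorem vecMul_injective_of_mul_eq_one {S : Matrix m n 𝕜} {T : Matrix n m 𝕜} (h : S * T = 1) :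
    Function.Injective fun v => v ᵥ* S := fun v w hvw => by
  simpa [vecMul_vecMul, h] using congrArg (· ᵥ* T) hvw

theorem IsStarProjection.re_diag_mem_Icc {p : Matrix n n 𝕜} (hp : IsStarProjection p) (k : n) :
    RCLike.re (p k k) ∈ Set.Icc 0 1 := by
  obtain ⟨h0, h1⟩ := hp.mem_Icc
  have h1k := (sub_nonneg.mpr h1).posSemidef.diag_nonneg (i := k)
  exact ⟨(RCLike.nonneg_iff.mp h0.posSemidef.diag_nonneg).1,
    by simpa using (RCLike.nonneg_iff.mp h1k).1⟩

theorem IsStarProjection.star_mul_mul {p : Matrix n n 𝕜} (hp : IsStarProjection p)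
    (U : unitaryGroup n 𝕜) : IsStarProjection (star (U : Matrix n n 𝕜) * p * U) := by
  refine ⟨?_, ?_⟩
  · calc star (U : Matrix n n 𝕜) * p * U * (star (U : Matrix n n 𝕜) * p * U)
        = star (U : Matrix n n 𝕜) * (p * (U * star (U : Matrix n n 𝕜)) * p) * U := by
          simp only [Matrix.mul_assoc]
      _ = star (U : Matrix n n 𝕜) * p * U := by
          rw [mem_unitaryGroup_iff.mp U.2, Matrix.mul_one, hp.isIdempotentElem.eq]
  · simp [IsSelfAdjoint, star_mul, hp.isSelfAdjoint.star_eq, mul_assoc]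

omit [DecidableEq n] in
theorem isStarProjection_mul_inv_mul_conjTranspose (M : Matrix n m 𝕜)
    (hM : IsUnit (Mᴴ * M).det) : IsStarProjection (M * (Mᴴ * M)⁻¹ * Mᴴ) := by
  refine ⟨?_, ?_⟩
  · calc M * (Mᴴ * M)⁻¹ * Mᴴ * (M * (Mᴴ * M)⁻¹ * Mᴴ)
        = M * ((Mᴴ * M)⁻¹ * (Mᴴ * M)) * (Mᴴ * M)⁻¹ * Mᴴ := by simp only [Matrix.mul_assoc]
      _ = M * (Mᴴ * M)⁻¹ * Mᴴ := by rw [nonsing_inv_mul _ hM, Matrix.mul_one]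
  · simp only [IsSelfAdjoint, star_eq_conjTranspose, conjTranspose_mul, conjTranspose_conjTranspose,
      conjTranspose_nonsing_inv, Matrix.mul_assoc]

omit [DecidableEq n] in
theorem trace_mul_inv_mul_conjTranspose (M : Matrix n m 𝕜)
    (hM : IsUnit (Mᴴ * M).det) : (M * (Mᴴ * M)⁻¹ * Mᴴ).trace = Fintype.card m := by
  rw [trace_mul_cycle, mul_nonsing_inv _ hM, trace_one]

theorem re_diag_smul_conjTranspose_mul_le {U : Matrix n m 𝕜} (hU : Uᴴ * U = 1) {a : ℝ}
    (ha : 0 ≤ a) (k : n) :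
    RCLike.re ((((√a : 𝕜) • Uᴴ)ᴴ * ((√a : 𝕜) • Uᴴ)) k k) ≤ a := by
  have hX : IsStarProjection (U * Uᴴ) := by
    simpa [hU] using isStarProjection_mul_inv_mul_conjTranspose U (by simp [hU])
  have hSS : ((√a : 𝕜) • Uᴴ)ᴴ * ((√a : 𝕜) • Uᴴ) = (a : 𝕜) • (U * Uᴴ) := by
    rw [conjTranspose_smul, conjTranspose_conjTranspose, Matrix.smul_mul, Matrix.mul_smul,
      smul_smul, RCLike.star_def, RCLike.conj_ofReal, ← RCLike.ofReal_mul, Real.mul_self_sqrt ha]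
  rw [hSS, Matrix.smul_apply, smul_eq_mul, RCLike.re_ofReal_mul]
  exact mul_le_of_le_one_right ha (hX.re_diag_mem_Icc k).2

theorem IsStarProjection.re_trace_mul_le_sum_eigenvalues {p A : Matrix n n 𝕜}
    (hp : IsStarProjection p) (hA : A.IsHermitian) (s : Finset n) (hs : p.trace = #s)
    (htop : ∀ i ∈ s, ∀ j ∉ s, hA.eigenvalues j ≤ hA.eigenvalues i) :
    RCLike.re (p * A).trace ≤ ∑ i ∈ s, hA.eigenvalues i := by
  set U := hA.eigenvectorUnitary
  set C := star (U : Matrix n n 𝕜) * p * U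
  have hC : IsStarProjection C := hp.star_mul_mul U
  have htrace : (p * A).trace = ∑ j, C j j * hA.eigenvalues j := by
    conv_lhs => rw [hA.spectral_theorem, Unitary.conjStarAlgAut_apply]
    rw [← Matrix.mul_assoc, trace_mul_cycle, ← Matrix.mul_assoc]
    simp [trace, mul_diagonal, C, U]
  have htraceC : ∑ j, RCLike.re (C j j) = #s := by
    have hCtr : C.trace = #s := by
      rw [trace_mul_cycle, mem_unitaryGroup_iff.mp U.2, Matrix.one_mul, hs]
    simpa [trace] using congrArg RCLike.re hCtr
  rw [htrace, map_sum]
  simp only [RCLike.re_mul_ofReal]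
  exact Finset.sum_mul_le_sum_of_mem_Icc_of_sum_eq_card s _ _ hC.re_diag_mem_Icc htraceC htop

theorem re_trace_inv_mul_le_sum_eigenvalues {P W : Matrix n n 𝕜} (hP : P.PosDef)
    (hWP : Commute W P) (hA : (W * P).IsHermitian) {S : Matrix m n 𝕜}
    (hS : Function.Injective fun v => v ᵥ* S) (s : Finset n) (hs : #s = Fintype.card m)
    (htop : ∀ i ∈ s, ∀ j ∉ s, hA.eigenvalues j ≤ hA.eigenvalues i) :
    RCLike.re ((S * P * Sᴴ)⁻¹ * (S * P * W * P * Sᴴ)).trace ≤ ∑ i ∈ s, hA.eigenvalues i := by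
  set R := CFC.sqrt P
  have hRH : Rᴴ = R := (CFC.sqrt_nonneg P).posSemidef.1
  have hRR : R * R = P := CFC.sqrt_mul_sqrt_self P hP.posSemidef.nonneg
  have hRW : Commute R W := by simp only [R, CFC.sqrt_eq_cfc]; exact hWP.symm.cfc_nnreal _
  have hRP : Commute R P := hRR ▸ (Commute.refl R).mul_right (Commute.refl R)
  set M := R * Sᴴ
  have hMH : Mᴴ = S * R := by simp only [M, conjTranspose_mul, conjTranspose_conjTranspose, hRH]
  have hMM : Mᴴ * M = S * P * Sᴴ := by rw [hMH, ← hRR]; simp only [M, Matrix.mul_assoc]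
  have hPWP : S * P * W * P * Sᴴ = Mᴴ * (W * P) * M := by
    have : R * (W * P) * R = P * W * P :=
      calc R * (W * P) * R = R * W * (P * R) := by simp only [Matrix.mul_assoc]
        _ = W * (R * R) * P := by rw [hRW.eq, ← hRP.eq]; simp only [Matrix.mul_assoc]
        _ = P * W * P := by rw [hRR, hWP.eq]
    calc S * P * W * P * Sᴴ = S * (P * W * P) * Sᴴ := by simp only [Matrix.mul_assoc]
      _ = Mᴴ * (W * P) * M := by rw [← this, hMH]; simp only [M, Matrix.mul_assoc]
  have hG : IsUnit (Mᴴ * M).det :=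
    (isUnit_iff_isUnit_det _).mp (hMM ▸ hP.mul_mul_conjTranspose_same hS).isUnit
  have htrace : ((Mᴴ * M)⁻¹ * (Mᴴ * (W * P) * M)).trace
      = (M * (Mᴴ * M)⁻¹ * Mᴴ * (W * P)).trace :=
    calc ((Mᴴ * M)⁻¹ * (Mᴴ * (W * P) * M)).trace
        = ((Mᴴ * M)⁻¹ * Mᴴ * (W * P) * M).trace := by simp only [Matrix.mul_assoc]
      _ = (M * ((Mᴴ * M)⁻¹ * Mᴴ * (W * P))).trace := trace_mul_comm _ _
      _ = (M * (Mᴴ * M)⁻¹ * Mᴴ * (W * P)).trace := by simp only [Matrix.mul_assoc]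
  rw [hPWP, ← hMM, htrace]
  refine (isStarProjection_mul_inv_mul_conjTranspose M hG).re_trace_mul_le_sum_eigenvalues hA s
    ?_ htop
  rw [trace_mul_inv_mul_conjTranspose M hG, hs]

omit [DecidableEq n] in
theorem trace_inv_mul_eq_sum_of_mul_conjTranspose_eq {P A : Matrix n n 𝕜} (hP : P.PosDef)
    {S : Matrix m n 𝕜} (hS : Function.Injective fun v => v ᵥ* S) (d : m → 𝕜)
    (hAS : A * Sᴴ = Sᴴ * diagonal d) :
    ((S * P * Sᴴ)⁻¹ * (S * P * A * Sᴴ)).trace = ∑ i, d i := by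
  have hG : IsUnit (S * P * Sᴴ).det :=
    (isUnit_iff_isUnit_det _).mp (hP.mul_mul_conjTranspose_same hS).isUnit
  rw [Matrix.mul_assoc (S * P), hAS, ← Matrix.mul_assoc (S * P),
    nonsing_inv_mul_cancel_left _ _ hG, trace_diagonal]

end Matrix

theorem stmt4_general {n τ : ℕ} (Pow : ℝ) (hPow : 0 < Pow)
    (P : Matrix (Fin n) (Fin n) ℂ) (hP : P.PosDef)
    (W : Matrix (Fin n) (Fin n) ℂ)
    (hcomm : W * P = P * W) (hherm : (W * P).IsHermitian)
    (U₁ : Matrix (Fin n) (Fin τ) ℂ) (hU : U₁ᴴ * U₁ = 1)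
    (f : Fin τ ↪ Fin n)
    (hEig : (W * P) * U₁ = U₁ * Matrix.diagonal (fun i => (hherm.eigenvalues (f i) : ℂ)))
    (htop : ∀ i : Fin τ, ∀ j : Fin n, j ∉ Set.range f →
      hherm.eigenvalues j ≤ hherm.eigenvalues (f i)) :
    let Sopt : Matrix (Fin τ) (Fin n) ℂ := (Real.sqrt Pow : ℂ) • U₁ᴴ
    (∀ k : Fin n, ((Soptᴴ * Sopt) k k).re ≤ Pow) ∧
    ((Sopt * P * Soptᴴ)⁻¹ * (Sopt * P * W * P * Soptᴴ)).trace
      = ((∑ i : Fin τ, hherm.eigenvalues (f i) : ℝ) : ℂ) ∧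
    (∀ S : Matrix (Fin τ) (Fin n) ℂ, S.rank = τ →
      (∀ k : Fin n, ((Sᴴ * S) k k).re ≤ Pow) →
      (((S * P * Sᴴ)⁻¹ * (S * P * W * P * Sᴴ)).trace).re
        ≤ ∑ i : Fin τ, hherm.eigenvalues (f i)) := by
  intro Sopt
  set c : ℂ := (Real.sqrt Pow : ℂ)
  have hc0 : c ≠ 0 := Complex.ofReal_ne_zero.mpr (Real.sqrt_ne_zero'.mpr hPow)
  have hSopt : Sopt = c • U₁ᴴ := rfl
  have hSoptH : Soptᴴ = c • U₁ := by simp [hSopt, c, conjTranspose_smul]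
  have hSoptInv : Sopt * (c⁻¹ • U₁) = 1 := by
    rw [hSopt, Matrix.smul_mul, Matrix.mul_smul, smul_smul, hU,
      mul_inv_cancel₀ hc0, one_smul]
  refine ⟨re_diag_smul_conjTranspose_mul_le hU hPow.le, ?_, fun S hS _ => ?_⟩
  · have hEigS : W * P * Soptᴴ = Soptᴴ * diagonal fun i => (hherm.eigenvalues (f i) : ℂ) := by
      rw [hSoptH, Matrix.mul_smul, hEig, Matrix.smul_mul]
    rw [show Sopt * P * W * P * Soptᴴ = Sopt * P * (W * P) * Soptᴴ by
        simp only [Matrix.mul_assoc],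
      trace_inv_mul_eq_sum_of_mul_conjTranspose_eq hP (vecMul_injective_of_mul_eq_one hSoptInv)
        _ hEigS]
    push_cast; rfl
  · set s := Finset.univ.map f
    rw [← Finset.sum_map Finset.univ f hherm.eigenvalues]
    refine re_trace_inv_mul_le_sum_eigenvalues hP hcomm hherm
      (vecMul_injective_of_rank_eq_card (by simpa using hS)) s (by simp [s]) ?_
    simpa [s] using htop

/-- The eigen-pilots S_opt = √Pow U₁ᴴ, where the orthonormal columns of U₁ are eigenvectors
of W̄P̄ for its τ largest eigenvalues, satisfy the per-user power constraint and maximize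
tr((S P̄ S*)⁻¹ S P̄ W̄ P̄ S*) over all full-row-rank τ×n pilot matrices S whose columns
satisfy s_k* s_k ≤ Pow, achieving the sum of the τ largest eigenvalues of W̄P̄. -/
theorem stmt4 {n τ : ℕ} (Pow : ℝ) (hPow : 0 < Pow)
    (P : Matrix (Fin n) (Fin n) ℂ) (hP : P.PosDef)
    (w : Fin n → ℝ) (hw : ∀ i, 0 ≤ w i)
    (W : Matrix (Fin n) (Fin n) ℂ) (hWdiag : W = Matrix.diagonal (fun i => (w i : ℂ)))
    (hcomm : W * P = P * W) (hherm : (W * P).IsHermitian)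
    (U₁ : Matrix (Fin n) (Fin τ) ℂ) (hU : U₁ᴴ * U₁ = 1)
    (f : Fin τ ↪ Fin n)
    (hEig : (W * P) * U₁ = U₁ * Matrix.diagonal (fun i => (hherm.eigenvalues (f i) : ℂ)))
    (htop : ∀ i : Fin τ, ∀ j : Fin n, j ∉ Set.range f →
      hherm.eigenvalues j ≤ hherm.eigenvalues (f i)) :
    let Sopt : Matrix (Fin τ) (Fin n) ℂ := (Real.sqrt Pow : ℂ) • U₁ᴴ
    (∀ k : Fin n, ((Soptᴴ * Sopt) k k).re ≤ Pow) ∧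
    ((Sopt * P * Soptᴴ)⁻¹ * (Sopt * P * W * P * Soptᴴ)).trace
      = ((∑ i : Fin τ, hherm.eigenvalues (f i) : ℝ) : ℂ) ∧
    (∀ S : Matrix (Fin τ) (Fin n) ℂ, S.rank = τ →
      (∀ k : Fin n, ((Sᴴ * S) k k).re ≤ Pow) →
      (((S * P * Sᴴ)⁻¹ * (S * P * W * P * Sᴴ)).trace).re
        ≤ ∑ i : Fin τ, hherm.eigenvalues (f i)) :=
  stmt4_general Pow hPow P hP W hcomm hherm U₁ hU f hEig htop
end

section
/- Let B be Hermitian positive definite, S ∈ ℂ^{N×m}, and define T = B^{1/2}(I - P)B^{1/2} where P is the orthogonal projection onto the column space of B^{1/2}S*. Then T is Hermitian PSD, and for any row vector s ∈ ℂ^{1×m}: sTs* = 0 if and only if s* ∈ R(S*); equivalently sTs* > 0 if and only if s* ∉ R(S*). -/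
/-! With `Q = B^{1/2}` Hermitian and `1 - P` a Hermitian idempotent, `T = ((1 - P) Q)ᴴ ((1 - P) Q)`,
so `T` is positive semidefinite and `s T sᴴ = ‖(1 - P) Q sᴴ‖²`. This vanishes iff `Q sᴴ` is fixed
by `P`, i.e. lies in `R(Q Sᴴ)`, and since `Q` is invertible this means `sᴴ ∈ R(Sᴴ)`. -/

open Matrix ComplexOrder

/-- The positive semidefinite square root of a positive semidefinite matrix, as defined in
the older Mathlib (`Matrix.PosSemidef.sqrt`, since removed). -/
noncomputable def Matrix.PosSemidef.sqrt {n 𝕜 : Type*} [Fintype n] [RCLike 𝕜] [DecidableEq n]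
    {A : Matrix n n 𝕜} (hA : A.PosSemidef) : Matrix n n 𝕜 :=
  (hA.1.eigenvectorUnitary : Matrix n n 𝕜) * diagonal ((↑) ∘ (fun x => Real.sqrt x) ∘ hA.1.eigenvalues) *
    (star hA.1.eigenvectorUnitary : Matrix n n 𝕜)

namespace Matrix

section Sqrt

variable {n 𝕜 : Type*} [Fintype n] [RCLike 𝕜] [DecidableEq n]

theorem PosSemidef.conjTranspose_sqrt {A : Matrix n n 𝕜} (hA : A.PosSemidef) :
    hA.sqrtᴴ = hA.sqrt := by
  unfold PosSemidef.sqrt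
  rw [conjTranspose_mul, conjTranspose_mul, diagonal_conjTranspose, ← star_eq_conjTranspose,
    ← star_eq_conjTranspose, star_star, Matrix.mul_assoc]
  congr 3
  funext i
  simp

theorem PosSemidef.sqrt_mul_self {A : Matrix n n 𝕜} (hA : A.PosSemidef) :
    hA.sqrt * hA.sqrt = A := by
  unfold PosSemidef.sqrt
  conv_rhs => rw [hA.1.spectral_theorem, Unitary.conjStarAlgAut_apply]
  have hU : (star hA.1.eigenvectorUnitary : Matrix n n 𝕜) * hA.1.eigenvectorUnitary = 1 :=
    Unitary.coe_star_mul_self _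
  rw [show ∀ a b c d e f : Matrix n n 𝕜, a * b * c * (d * e * f) = a * (b * (c * d) * e) * f by
    intros; simp only [Matrix.mul_assoc], hU, Matrix.mul_one, diagonal_mul_diagonal]
  congr 3
  funext i
  simp only [Function.comp]
  rw [← RCLike.ofReal_mul, Real.mul_self_sqrt (hA.eigenvalues_nonneg i)]

theorem PosDef.isUnit_sqrt {A : Matrix n n 𝕜} (hA : A.PosDef) : IsUnit hA.posSemidef.sqrt :=
  isUnit_of_mul_isUnit_left (hA.posSemidef.sqrt_mul_self ▸ hA.isUnit)

end Sqrt

section Projection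

variable {m k 𝕜 : Type*} [Fintype m] [DecidableEq m] [RCLike 𝕜]

theorem one_sub_eq_conjTranspose_mul_self {P : Matrix m m 𝕜} (hProj : P * P = P)
    (hHerm : Pᴴ = P) : 1 - P = (1 - P)ᴴ * (1 - P) := by
  rw [conjTranspose_sub, conjTranspose_one, hHerm]
  simp only [Matrix.mul_sub, Matrix.sub_mul, Matrix.one_mul, Matrix.mul_one, hProj, sub_self,
    sub_zero]

theorem conjTranspose_mul_one_sub_mul {P : Matrix m m 𝕜} (hProj : P * P = P) (hHerm : Pᴴ = P)
    (Q : Matrix m k 𝕜) : Qᴴ * (1 - P) * Q = ((1 - P) * Q)ᴴ * ((1 - P) * Q) := by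
  conv_lhs => rw [one_sub_eq_conjTranspose_mul_self hProj hHerm]
  rw [conjTranspose_mul]
  simp only [Matrix.mul_assoc]

theorem one_sub_mul_mul_eq_zero_iff {l n : Type*} [Fintype n] {P Q : Matrix m m 𝕜}
    {R : Matrix m n 𝕜} [Invertible Q]
    (hRange : ∀ v : Matrix m l 𝕜, (∃ c : Matrix n l 𝕜, v = Q * R * c) → P * v = v)
    (hInto : ∀ v : Matrix m l 𝕜, ∃ c : Matrix n l 𝕜, P * v = Q * R * c) (x : Matrix m l 𝕜) :
    (1 - P) * Q * x = 0 ↔ ∃ c : Matrix n l 𝕜, x = R * c := by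
  rw [Matrix.mul_assoc, Matrix.sub_mul, Matrix.one_mul, sub_eq_zero, eq_comm]
  constructor
  · intro hfix
    obtain ⟨c, hc⟩ := hInto (Q * x)
    refine ⟨c, (mul_right_inj_of_invertible Q).mp ?_⟩
    rw [← hfix, hc, Matrix.mul_assoc]
  · rintro ⟨c, rfl⟩
    exact hRange _ ⟨c, (Matrix.mul_assoc _ _ _).symm⟩

end Projection

theorem conjTranspose_mul_self_apply_eq_zero_iff {n 𝕜 : Type*} [Fintype n] [RCLike 𝕜]
    {v : Matrix n (Fin 1) 𝕜} : (vᴴ * v) 0 0 = 0 ↔ v = 0 := by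
  change star (fun i => v i 0) ⬝ᵥ (fun i => v i 0) = 0 ↔ v = 0
  rw [dotProduct_star_self_eq_zero]
  refine ⟨fun h => ?_, fun h => h ▸ rfl⟩
  ext i j
  rw [Subsingleton.elim j 0]
  exact congrFun h i

end Matrix

theorem Complex.re_pos_iff_ne_zero {z : ℂ} (hz : 0 ≤ z) : 0 < z.re ↔ z ≠ 0 := by
  rw [← hz.lt_iff_ne', Complex.pos_iff, (Complex.nonneg_iff.mp hz).2]
  simp

/-- Let B be Hermitian positive definite, S an N×m matrix, P the orthogonal projection
onto the column space of B^{1/2}S*, and T = B^{1/2}(I - P)B^{1/2}. Then T is Hermitian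
PSD and, for any row vector s, sTs* = 0 iff s* ∈ R(S*); equivalently sTs* > 0 iff
s* ∉ R(S*). -/
theorem stmt9 {N m : ℕ} (B : Matrix (Fin m) (Fin m) ℂ) (hB : B.PosDef)
    (S : Matrix (Fin N) (Fin m) ℂ)
    (P : Matrix (Fin m) (Fin m) ℂ)
    (hProj : P * P = P) (hHerm : Pᴴ = P)
    (hRange : ∀ v : Matrix (Fin m) (Fin 1) ℂ,
      (∃ c : Matrix (Fin N) (Fin 1) ℂ, v = ((Matrix.PosSemidef.sqrt hB.posSemidef) * Sᴴ) * c) → P * v = v)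
    (hInto : ∀ v : Matrix (Fin m) (Fin 1) ℂ,
      ∃ c : Matrix (Fin N) (Fin 1) ℂ, P * v = ((Matrix.PosSemidef.sqrt hB.posSemidef) * Sᴴ) * c) :
    let T : Matrix (Fin m) (Fin m) ℂ :=
      (Matrix.PosSemidef.sqrt hB.posSemidef) * (1 - P) * (Matrix.PosSemidef.sqrt hB.posSemidef)
    T.PosSemidef ∧
    (∀ s : Matrix (Fin 1) (Fin m) ℂ,
      (((s * T * sᴴ) 0 0 = 0) ↔ ∃ c : Matrix (Fin N) (Fin 1) ℂ, sᴴ = Sᴴ * c) ∧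
      ((0 < ((s * T * sᴴ) 0 0).re) ↔ ¬ ∃ c : Matrix (Fin N) (Fin 1) ℂ, sᴴ = Sᴴ * c)) := by
  intro T
  set Q := hB.posSemidef.sqrt
  have hT : T = ((1 - P) * Q)ᴴ * ((1 - P) * Q) := by
    rw [← conjTranspose_mul_one_sub_mul hProj hHerm, hB.posSemidef.conjTranspose_sqrt]
  have hTpsd : T.PosSemidef := hT ▸ posSemidef_conjTranspose_mul_self _
  refine ⟨hTpsd, fun s => ?_⟩
  have hquad : s * T * sᴴ = ((1 - P) * Q * sᴴ)ᴴ * ((1 - P) * Q * sᴴ) := by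
    simp only [hT, conjTranspose_mul, conjTranspose_conjTranspose, Matrix.mul_assoc]
  let _ : Invertible Q := hB.isUnit_sqrt.invertible
  have hzero : (s * T * sᴴ) 0 0 = 0 ↔ ∃ c : Matrix (Fin N) (Fin 1) ℂ, sᴴ = Sᴴ * c := by
    rw [hquad, conjTranspose_mul_self_apply_eq_zero_iff, one_sub_mul_mul_eq_zero_iff hRange hInto]
  refine ⟨hzero, ?_⟩
  rw [Complex.re_pos_iff_ne_zero (hTpsd.mul_mul_conjTranspose_same s).diag_nonneg, Ne, hzero]
end

section
/- For a Hermitian positive definite matrix Q ∈ ℂ^{N×N} and N_RF ≤ N, the maximum over full-row-rank matrices W ∈ ℂ^{N_RF×N} of tr(W Q² W* (W Q W*)^{-1}) equals the sum of the N_RF largest eigenvalues of Q, attained by W = T Ũ* where Ũ's columns are the top-N_RF eigenvectors of Q and T is any invertible N_RF×N_RF matrix. -/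
/-!
With `S = Q^{1/2}` and `B = W S`, the objective is `tr(Q P)` for the orthogonal projection
`P = Bᴴ (B Bᴴ)⁻¹ B` of rank `N_RF`. In an eigenbasis of `Q` this is `∑ λⱼ pⱼ`, where the
diagonal entries `pⱼ` of the conjugated projection lie in `[0, 1]` and sum to `N_RF`; such a
weighted sum is at most the sum of the `N_RF` largest `λⱼ`. For `W = T Ũᴴ` the two Gram
matrices are `T D² Tᴴ` and `T D Tᴴ`, with `D` the diagonal of the top eigenvalues, so the
objective is `tr D`.
-/

open Matrix ComplexOrder
open scoped MatrixOrder Finset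

theorem Finset.sum_mul_le_sum_of_forall_le {ι : Type*} [Fintype ι] [DecidableEq ι]
    (s : Finset ι) (a μ : ι → ℝ) (hs : ∀ i ∈ s, ∀ j ∉ s, a j ≤ a i)
    (hμ : ∀ j, μ j ∈ Set.Icc 0 1) (hμs : ∑ j, μ j = #s) :
    ∑ j, a j * μ j ≤ ∑ i ∈ s, a i := by
  obtain ⟨c, hc_in, hc_out⟩ : ∃ c, (∀ i ∈ s, c ≤ a i) ∧ ∀ j ∉ s, a j ≤ c := by
    rcases s.eq_empty_or_nonempty with rfl | hne
    · obtain ⟨c, hc⟩ := (Set.finite_range a).bddAbove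
      exact ⟨c, by simp, fun j _ => hc ⟨j, rfl⟩⟩
    · exact ⟨s.inf' hne a, fun i hi => s.inf'_le a hi,
        fun j hj => s.le_inf' hne a fun i hi => hs i hi j hj⟩
  -- As `∑ μ = #s`, the difference of the two sides is `∑ⱼ (a j - c) (μ j - 𝟙ₛ j)`.
  have hterm : ∀ j, (a j - c) * (μ j - if j ∈ s then 1 else 0) ≤ 0 := by
    intro j
    split_ifs with hj
    · exact mul_nonpos_of_nonneg_of_nonpos (by linarith [hc_in j hj]) (by linarith [(hμ j).2])
    · exact mul_nonpos_of_nonpos_of_nonneg (by linarith [hc_out j hj]) (by linarith [(hμ j).1])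
  have hsum := Finset.sum_nonpos fun j (_ : j ∈ Finset.univ) => hterm j
  simp only [mul_sub, sub_mul, Finset.sum_sub_distrib, mul_ite, mul_one, mul_zero,
    Finset.sum_ite_mem, Finset.univ_inter, ← Finset.mul_sum, hμs, Finset.sum_const,
    nsmul_eq_mul] at hsum
  linarith

variable {K : Type*} [Field K] {m n : Type*} [Fintype m] [Fintype n]

theorem Matrix.vecMul_injective_of_rank_eq_card_s13 {W : Matrix m n K} (hW : W.rank = Fintype.card m) :
    Function.Injective W.vecMul :=
  vecMul_injective_iff.mpr <| linearIndependent_iff_card_eq_finrank_span.mpr <|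
    hW.symm.trans W.rank_eq_finrank_span_row

variable [StarRing K] [DecidableEq m]

noncomputable def traceQuotient (Q : Matrix n n K) (W : Matrix m n K) : K :=
  (W * (Q * Q) * Wᴴ * (W * Q * Wᴴ)⁻¹).trace

theorem Matrix.isStarProjection_conjTranspose_mul_inv_mul {B : Matrix m n K}
    (hB : IsUnit (B * Bᴴ).det) : IsStarProjection (Bᴴ * (B * Bᴴ)⁻¹ * B) where
  isIdempotentElem := by
    change Bᴴ * (B * Bᴴ)⁻¹ * B * (Bᴴ * (B * Bᴴ)⁻¹ * B) = _
    rw [show Bᴴ * (B * Bᴴ)⁻¹ * B * (Bᴴ * (B * Bᴴ)⁻¹ * B)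
        = Bᴴ * ((B * Bᴴ)⁻¹ * (B * Bᴴ)) * (B * Bᴴ)⁻¹ * B by simp only [Matrix.mul_assoc],
      nonsing_inv_mul _ hB, Matrix.mul_one]
  isSelfAdjoint := by
    rw [IsSelfAdjoint, star_eq_conjTranspose, conjTranspose_mul, conjTranspose_mul,
      conjTranspose_nonsing_inv, conjTranspose_mul, conjTranspose_conjTranspose, Matrix.mul_assoc]

theorem Matrix.trace_conjTranspose_mul_inv_mul {B : Matrix m n K} (hB : IsUnit (B * Bᴴ).det) :
    (Bᴴ * (B * Bᴴ)⁻¹ * B).trace = Fintype.card m := by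
  rw [trace_mul_cycle, mul_nonsing_inv _ hB, trace_one]

theorem traceQuotient_eq_trace_mul {Q S : Matrix n n K} (hS : Sᴴ = S) (hSS : S * S = Q)
    (W : Matrix m n K) :
    traceQuotient Q W = (Q * ((W * S)ᴴ * ((W * S) * (W * S)ᴴ)⁻¹ * (W * S))).trace := by
  have hQQ : W * (Q * Q) * Wᴴ = W * S * Q * (W * S)ᴴ := by
    rw [conjTranspose_mul, hS, ← hSS]; simp only [Matrix.mul_assoc]
  have hQ : W * Q * Wᴴ = W * S * (W * S)ᴴ := by
    rw [conjTranspose_mul, hS, ← hSS]; simp only [Matrix.mul_assoc]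
  rw [traceQuotient, hQQ, hQ, Matrix.mul_assoc, Matrix.mul_assoc, trace_mul_comm]
  simp only [Matrix.mul_assoc]

theorem trace_conj_mul_inv_conj {T A D : Matrix m m K} (hT : IsUnit T.det) :
    (T * A * Tᴴ * (T * D * Tᴴ)⁻¹).trace = (A * D⁻¹).trace := by
  have hTH : IsUnit Tᴴ.det := by rw [det_conjTranspose]; exact hT.star
  rw [Matrix.mul_inv_rev, Matrix.mul_inv_rev,
    show T * A * Tᴴ * (Tᴴ⁻¹ * (D⁻¹ * T⁻¹)) = T * A * (Tᴴ * Tᴴ⁻¹) * D⁻¹ * T⁻¹ by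
      simp only [Matrix.mul_assoc],
    mul_nonsing_inv _ hTH, Matrix.mul_one, trace_mul_cycle, ← Matrix.mul_assoc T⁻¹,
    nonsing_inv_mul _ hT, Matrix.one_mul]

theorem traceQuotient_mul_conjTranspose_of_mul_eq_mul_diagonal {Q : Matrix n n K}
    {U : Matrix n m K} (hU : Uᴴ * U = 1) {d : m → K} (hd : ∀ i, d i ≠ 0)
    (hEig : Q * U = U * diagonal d) {T : Matrix m m K} (hT : IsUnit T.det) :
    traceQuotient Q (T * Uᴴ) = ∑ i, d i := by
  have hD : IsUnit (diagonal d).det := by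
    rw [det_diagonal]; exact (Finset.prod_ne_zero_iff.mpr fun i _ => hd i).isUnit
  have hQ : Uᴴ * Q * U = diagonal d := by
    rw [Matrix.mul_assoc, hEig, ← Matrix.mul_assoc, hU, Matrix.one_mul]
  have hQQ : Uᴴ * (Q * Q) * U = diagonal d * diagonal d := by
    rw [Matrix.mul_assoc Uᴴ, Matrix.mul_assoc Q, hEig, ← Matrix.mul_assoc Q, ← Matrix.mul_assoc,
      ← Matrix.mul_assoc, hQ]
  have conj (X : Matrix n n K) : T * Uᴴ * X * (U * Tᴴ) = T * (Uᴴ * X * U) * Tᴴ := by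
    simp only [Matrix.mul_assoc]
  rw [traceQuotient, conjTranspose_mul, conjTranspose_conjTranspose, conj (Q * Q), conj Q, hQ, hQQ,
    trace_conj_mul_inv_conj hT, Matrix.mul_assoc, mul_nonsing_inv _ hD, Matrix.mul_one,
    trace_diagonal]

variable [DecidableEq n]

theorem IsStarProjection.re_diag_mem_Icc {P : Matrix n n ℂ} (hP : IsStarProjection P) (j : n) :
    (P j j).re ∈ Set.Icc 0 1 := by
  have h₀ : 0 ≤ P j j := (nonneg_iff_posSemidef.mp hP.nonneg).diag_nonneg
  have h₁ : 0 ≤ (1 - P) j j := (nonneg_iff_posSemidef.mp hP.one_sub_nonneg).diag_nonneg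
  rw [Matrix.sub_apply, one_apply_eq, Complex.nonneg_iff] at h₁
  exact ⟨(Complex.nonneg_iff.mp h₀).1, by simpa using h₁.1⟩

theorem IsStarProjection.conjTranspose_mul_mul_unitary {P : Matrix n n ℂ} (hP : IsStarProjection P)
    {U : Matrix n n ℂ} (hU : U ∈ unitaryGroup n ℂ) : IsStarProjection (star U * P * U) := by
  simpa using hP.map (Unitary.conjStarAlgAut ℂ (Matrix n n ℂ) (star ⟨U, hU⟩))

theorem Matrix.IsHermitian.trace_mul_eq_sum_eigenvalues_mul {Q : Matrix n n ℂ} (hQ : Q.IsHermitian)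
    (P : Matrix n n ℂ) :
    (Q * P).trace = ∑ j, (hQ.eigenvalues j : ℂ) *
      (star (hQ.eigenvectorUnitary : Matrix n n ℂ) * P * hQ.eigenvectorUnitary) j j := by
  have hQ' : Q = (hQ.eigenvectorUnitary : Matrix n n ℂ) *
      diagonal (RCLike.ofReal ∘ hQ.eigenvalues) * star (hQ.eigenvectorUnitary : Matrix n n ℂ) := hQ.spectral_theorem
  conv_lhs => rw [hQ', Matrix.mul_assoc, Matrix.mul_assoc, trace_mul_comm, Matrix.mul_assoc, trace]
  simp [diagonal_mul, Matrix.mul_assoc]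

theorem Matrix.IsHermitian.re_trace_mul_le_sum_eigenvalues {Q : Matrix n n ℂ} (hQ : Q.IsHermitian)
    (s : Finset n) (hs : ∀ i ∈ s, ∀ j ∉ s, hQ.eigenvalues j ≤ hQ.eigenvalues i)
    {P : Matrix n n ℂ} (hP : IsStarProjection P) (htr : P.trace = #s) :
    (Q * P).trace.re ≤ ∑ i ∈ s, hQ.eigenvalues i := by
  set M := star (hQ.eigenvectorUnitary : Matrix n n ℂ) * P * hQ.eigenvectorUnitary
  have hM : IsStarProjection M := hP.conjTranspose_mul_mul_unitary hQ.eigenvectorUnitary.2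
  have hMtr : M.trace = #s := by
    rw [← htr, trace_mul_cycle, (mem_unitaryGroup_iff.mp hQ.eigenvectorUnitary.2), Matrix.one_mul]
  rw [hQ.trace_mul_eq_sum_eigenvalues_mul, Complex.re_sum]
  simp only [Complex.re_ofReal_mul]
  refine Finset.sum_mul_le_sum_of_forall_le s _ _ hs hM.re_diag_mem_Icc ?_
  simpa [trace, Complex.re_sum] using congrArg Complex.re hMtr

theorem Matrix.PosDef.exists_isStarProjection_traceQuotient_eq {Q : Matrix n n ℂ}
    (hQ : Q.PosDef) {W : Matrix m n ℂ} (hW : W.rank = Fintype.card m) :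
    ∃ P : Matrix n n ℂ, IsStarProjection P ∧ P.trace = Fintype.card m ∧
      traceQuotient Q W = (Q * P).trace := by
  set S := CFC.sqrt Q
  have hS : Sᴴ = S := (CFC.sqrt_nonneg Q).posSemidef.isHermitian
  have hSS : S * S = Q := CFC.sqrt_mul_sqrt_self Q hQ.posSemidef.nonneg
  have hSdet : IsUnit S.det := by
    refine isUnit_of_mul_isUnit_left (y := S.det) ?_
    rw [← det_mul, hSS]
    exact (isUnit_iff_isUnit_det Q).mp hQ.isUnit
  have hB : IsUnit ((W * S) * (W * S)ᴴ).det :=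
    (PosDef.mul_conjTranspose_self _ (vecMul_injective_of_rank_eq_card_s13
      (by rw [rank_mul_eq_left_of_isUnit_det S W hSdet, hW]))).isUnit.map detMonoidHom
  exact ⟨_, isStarProjection_conjTranspose_mul_inv_mul hB, trace_conjTranspose_mul_inv_mul hB,
    traceQuotient_eq_trace_mul hS hSS W⟩

theorem stmt13_general {N NRF : ℕ}
    (Q : Matrix (Fin N) (Fin N) ℂ) (hQ : Q.PosDef) (hherm : Q.IsHermitian)
    (f : Fin NRF ↪ Fin N)
    (htop : ∀ i : Fin NRF, ∀ j : Fin N, j ∉ Set.range f →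
      hherm.eigenvalues j ≤ hherm.eigenvalues (f i))
    (U : Matrix (Fin N) (Fin NRF) ℂ) (hU : Uᴴ * U = 1)
    (hEig : Q * U = U * Matrix.diagonal (fun i => (hherm.eigenvalues (f i) : ℂ))) :
    IsGreatest {x : ℝ | ∃ W : Matrix (Fin NRF) (Fin N) ℂ, W.rank = NRF ∧
        x = ((W * (Q * Q) * Wᴴ * (W * Q * Wᴴ)⁻¹).trace).re}
      (∑ i : Fin NRF, hherm.eigenvalues (f i)) ∧
    ∀ T : Matrix (Fin NRF) (Fin NRF) ℂ, IsUnit T.det →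
      (((T * Uᴴ) * (Q * Q) * (T * Uᴴ)ᴴ * ((T * Uᴴ) * Q * (T * Uᴴ)ᴴ)⁻¹).trace).re
        = ∑ i : Fin NRF, hherm.eigenvalues (f i) := by
  have hvalue (T : Matrix (Fin NRF) (Fin NRF) ℂ) (hT : IsUnit T.det) :
      (traceQuotient Q (T * Uᴴ)).re = ∑ i, hherm.eigenvalues (f i) := by
    rw [traceQuotient_mul_conjTranspose_of_mul_eq_mul_diagonal hU
      (fun i => Complex.ofReal_ne_zero.mpr (hQ.eigenvalues_pos (f i)).ne') hEig hT,
      ← Complex.ofReal_sum, Complex.ofReal_re]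
  have hrank : Uᴴ.rank = NRF := le_antisymm (by simpa using rank_le_card_height Uᴴ)
    (by simpa [hU] using rank_mul_le_left Uᴴ U)
  refine ⟨⟨⟨Uᴴ, hrank, ?_⟩, ?_⟩, hvalue⟩
  · rw [← Matrix.one_mul Uᴴ]
    exact (hvalue 1 (by simp)).symm
  · rintro x ⟨W, hW, rfl⟩
    obtain ⟨P, hP, hPtr, hWP⟩ :=
      hQ.exists_isStarProjection_traceQuotient_eq (hW.trans (Fintype.card_fin NRF).symm)
    rw [← Finset.sum_map Finset.univ f]
    change (traceQuotient Q W).re ≤ _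
    rw [hWP]
    refine hherm.re_trace_mul_le_sum_eigenvalues _ ?_ hP (by simpa using hPtr)
    simp only [Finset.mem_map, Finset.mem_univ, true_and, forall_exists_index,
      forall_apply_eq_imp_iff]
    exact fun i j hj => htop i j (by simpa using hj)

/-- For Hermitian positive definite Q and NRF ≤ N, the maximum over full-row-rank
NRF×N matrices W of tr(W Q² W* (W Q W*)⁻¹) equals the sum of the NRF largest
eigenvalues of Q, and is attained by W = T Ũ* where the columns of Ũ are eigenvectors
of Q for its NRF largest eigenvalues and T is any invertible NRF×NRF matrix. -/
theorem stmt13 {N NRF : ℕ} (hNRF : NRF ≤ N)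
    (Q : Matrix (Fin N) (Fin N) ℂ) (hQ : Q.PosDef) (hherm : Q.IsHermitian)
    (f : Fin NRF ↪ Fin N)
    (htop : ∀ i : Fin NRF, ∀ j : Fin N, j ∉ Set.range f →
      hherm.eigenvalues j ≤ hherm.eigenvalues (f i))
    (U : Matrix (Fin N) (Fin NRF) ℂ) (hU : Uᴴ * U = 1)
    (hEig : Q * U = U * Matrix.diagonal (fun i => (hherm.eigenvalues (f i) : ℂ))) :
    IsGreatest {x : ℝ | ∃ W : Matrix (Fin NRF) (Fin N) ℂ, W.rank = NRF ∧
        x = ((W * (Q * Q) * Wᴴ * (W * Q * Wᴴ)⁻¹).trace).re}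
      (∑ i : Fin NRF, hherm.eigenvalues (f i)) ∧
    ∀ T : Matrix (Fin NRF) (Fin NRF) ℂ, IsUnit T.det →
      (((T * Uᴴ) * (Q * Q) * (T * Uᴴ)ᴴ * ((T * Uᴴ) * Q * (T * Uᴴ)ᴴ)⁻¹).trace).re
        = ∑ i : Fin NRF, hherm.eigenvalues (f i) :=
  stmt13_general Q hQ hherm f htop U hU hEig
end
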